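/- Let I₁ : ℝ → ℝ be twice differentiable, I₀ : ℝ → ℝ be any function, and let y be three times differentiable on an open interval I ⊆ ℝ with y'(x) ≠ 0 and (y'(x))² = 1/I₁(y(x)) for all x ∈ I. Then for every real number k and every x ∈ I, (y'(x))²·(I₁(y(x))·k² + I₀(y(x))) + (1/2)·{y,x}(x) = k² − V(x), where V(x) = −I₀(y(x))/I₁(y(x)) + (4·I₁(y(x))·I₁''(y(x)) − 5·(I₁'(y(x)))²)/(16·I₁(y(x))³). -/

import Mathlib

/-!
Taking logarithmic derivatives of `(y')² = 1/I₁(y)` gives `y''/y' = -(I₁'(y)/I₁(y))·y'/2` on the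
open set `I`. Differentiating this expression once more and using `(y')² = 1/I₁(y)` again turns the
left-hand side into a rational expression in `I₁(y)`, `I₁'(y)`, `I₁''(y)`, and the formula is algebra.
-/

open Filter Topology

theorem two_mul_logDeriv_eq_neg_logDeriv_of_sq_eq_inv {𝕜 𝕜' : Type*} [NontriviallyNormedField 𝕜]
    [NontriviallyNormedField 𝕜'] [NormedAlgebra 𝕜 𝕜'] {f g : 𝕜 → 𝕜'} {x : 𝕜}
    (hfg : ∀ᶠ t in 𝓝 x, f t ^ 2 = (g t)⁻¹) (hf : DifferentiableAt 𝕜 f x)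
    (hg : DifferentiableAt 𝕜 g x) :
    2 * logDeriv f x = -logDeriv g x := by
  have hzpow : (fun t => f t ^ 2) =ᶠ[𝓝 x] fun t => g t ^ (-1 : ℤ) :=
    hfg.mono fun t ht => by simp only [ht, zpow_neg_one]
  have := (logDeriv_congr_nhds hzpow).self_of_nhds
  rw [logDeriv_fun_pow hf, logDeriv_fun_zpow hg] at this
  simpa using this

theorem deriv_deriv_div_deriv_of_sq_deriv_eq_one_div {I₁ y : ℝ → ℝ} {x : ℝ}
    (h : ∀ᶠ t in 𝓝 x, deriv y t ^ 2 = 1 / I₁ (y t)) (hI₁ : DifferentiableAt ℝ I₁ (y x))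
    (hy : DifferentiableAt ℝ y x) (hy' : DifferentiableAt ℝ (deriv y) x) :
    deriv (deriv y) x / deriv y x = -(deriv I₁ (y x) / I₁ (y x) * deriv y x) / 2 := by
  have := two_mul_logDeriv_eq_neg_logDeriv_of_sq_eq_inv (g := I₁ ∘ y)
    (h.mono fun t ht => by rw [ht, one_div, Function.comp_apply]) hy' (hI₁.comp x hy)
  rw [logDeriv_comp hI₁ hy, logDeriv_apply, logDeriv_apply] at this
  linear_combination this / 2

theorem milson_identity {a b c p q k i : ℝ} (hp : p ≠ 0) (hpa : p ^ 2 = 1 / a)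
    (hq : q / p = -(b / a * p) / 2) :
    p ^ 2 * (a * k ^ 2 + i)
        + 1 / 2 * (-((c * p * a - b * (b * p)) / a ^ 2 * p + b / a * q) / 2 - 1 / 2 * (q / p) ^ 2)
      = k ^ 2 - (-(i / a) + (4 * a * c - 5 * b ^ 2) / (16 * a ^ 3)) := by
  have ha : a = (p ^ 2)⁻¹ := by rw [hpa, one_div, inv_inv]
  have hq' : q = -(b / a * p ^ 2) / 2 := by field_simp at hq ⊢; linear_combination hq
  rw [hq, hq', ha]
  field_simp
  ring

theorem stmt_1 (I₁ I₀ y : ℝ → ℝ) (I : Set ℝ) (hI : IsOpen I)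
    (hI₁ : Differentiable ℝ I₁) (hI₁' : Differentiable ℝ (deriv I₁))
    (hy : ∀ x ∈ I, DifferentiableAt ℝ y x)
    (hy' : ∀ x ∈ I, DifferentiableAt ℝ (deriv y) x)
    (hy0 : ∀ x ∈ I, deriv y x ≠ 0)
    (heq : ∀ x ∈ I, (deriv y x) ^ 2 = 1 / I₁ (y x)) :
    ∀ (k : ℝ), ∀ x ∈ I,
      (deriv y x) ^ 2 * (I₁ (y x) * k ^ 2 + I₀ (y x))
          + (1 / 2) * (deriv (fun t => deriv (deriv y) t / deriv y t) x
              - (1 / 2) * (deriv (deriv y) x / deriv y x) ^ 2)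
        = k ^ 2 - (-(I₀ (y x) / I₁ (y x))
            + (4 * I₁ (y x) * deriv (deriv I₁) (y x) - 5 * (deriv I₁ (y x)) ^ 2)
              / (16 * (I₁ (y x)) ^ 3)) := by
  intro k x hx
  have hlog : ∀ t ∈ I,
      deriv (deriv y) t / deriv y t = -(deriv I₁ (y t) / I₁ (y t) * deriv y t) / 2 :=
    fun t ht => deriv_deriv_div_deriv_of_sq_deriv_eq_one_div
      (eventually_of_mem (hI.mem_nhds ht) heq) (hI₁ _) (hy t ht) (hy' t ht)
  have hI₁y : I₁ (y x) ≠ 0 := fun h => hy0 x hx (by simpa [h] using heq x hx)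
  have hI₁_comp := (hI₁ (y x)).hasDerivAt.comp x (hy x hx).hasDerivAt
  have hderivI₁_comp := (hI₁' (y x)).hasDerivAt.comp x (hy x hx).hasDerivAt
  have hlog_deriv := ((hderivI₁_comp.div hI₁_comp hI₁y).mul (hy' x hx).hasDerivAt).neg.div_const 2
  rw [(hlog_deriv.congr_of_eventuallyEq (eventually_of_mem (hI.mem_nhds hx) hlog)).deriv]
  exact milson_identity (hy0 x hx) (heq x hx) (hlog x hx)
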